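/- arXiv:1904.05591 — 2 statements merged into one kernel-verified Lean document; each statement's English description precedes it below -/
import Mathlib

section
/- For the MDS-coded scheme with K nodes, storage fraction μ ∈ [1/K, 1], m rows, per-computation time τ > 0, rate-η exponential setup times, and communication weight γ ≥ 0, the average total normalized latency equals (H_K - H_{K-⌈1/μ⌉})/(η·τ) + m·(μ + γ). -/
open MeasureTheory ProbabilityTheory

/-- The `q`-th smallest value (1-indexed) among `f 0, …, f (K-1)`. -/
noncomputable def orderStat {K : ℕ} (f : Fin K → ℝ) (q : ℕ) : ℝ :=
  ((List.ofFn f).insertionSort (· ≤ ·)).getD (q - 1) 0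

/-!
By the layer-cake formula, `E[X_(q)] = ∫₀^∞ P(X_(q) > t) dt`, and `X_(q) > t` exactly when
fewer than `q` of the `K` independent variables are `≤ t`: a binomial tail in
`p = 1 - e^{-ηt}`. The `j`-th binomial term integrates to the Beta integral
`C(K,j) B(j+1, K-j) / η = 1 / (η (K-j))`, and summing over `j < q` gives
`(H_K - H_{K-q}) / η`. Everything else in the latency is deterministic.
-/

open Finset Real

theorem List.Pairwise.getD_le_iff_lt_countP {α : Type*} [LinearOrder α] {l : List α}
    (hl : l.Pairwise (· ≤ ·)) {j : ℕ} (hj : j < l.length) (d t : α) :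
    l.getD j d ≤ t ↔ j < l.countP (· ≤ t) := by
  induction l generalizing j with
  | nil => simp at hj
  | cons a l ih =>
    obtain ⟨ha, hl⟩ := List.pairwise_cons.1 hl
    by_cases hat : a ≤ t
    · cases j with
      | zero => simp [hat]
      | succ j =>
        simp only [List.getD_cons_succ, List.countP_cons, hat, decide_true, if_true]
        rw [ih hl (by simpa using hj)]
        omega
    · have hgt : ∀ x ∈ a :: l, ¬ x ≤ t := by
        intro x hx hxt
        rcases List.mem_cons.1 hx with rfl | hx
        exacts [hat hxt, hat ((ha x hx).trans hxt)]
      have hmem : (a :: l).getD j d ∈ a :: l := by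
        rw [List.getD_eq_getElem _ _ hj]; exact List.getElem_mem _
      rw [List.countP_eq_zero.2 (by simpa using hgt)]
      simpa using hgt _ hmem

theorem List.countP_ofFn {α : Type*} {n : ℕ} (f : Fin n → α) (p : α → Bool) :
    (List.ofFn f).countP p = #{i | p (f i)} := by
  rw [List.ofFn_eq_map, List.countP_map, List.countP_eq_length_filter, Fin.univ_def]
  simp [Finset.card_def, Function.comp_def]

theorem orderStat_le_iff {K q : ℕ} (f : Fin K → ℝ) (hq : 1 ≤ q) (hqK : q ≤ K) (t : ℝ) :
    orderStat f q ≤ t ↔ q ≤ #{i | f i ≤ t} := by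
  have hperm := List.perm_insertionSort (· ≤ ·) (List.ofFn f)
  have hlen : ((List.ofFn f).insertionSort (· ≤ ·)).length = K := by simp
  rw [orderStat, (List.pairwise_insertionSort _ _).getD_le_iff_lt_countP (by omega),
    hperm.countP_eq, List.countP_ofFn]
  simp only [decide_eq_true_eq]
  omega

theorem orderStat_nonneg {K q : ℕ} {f : Fin K → ℝ} (hf : ∀ k, 0 ≤ f k) (hq : 1 ≤ q)
    (hqK : q ≤ K) : 0 ≤ orderStat f q := by
  by_contra! hneg
  have hcard := (orderStat_le_iff f hq hqK _).1 le_rfl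
  obtain ⟨k, hk⟩ := Finset.card_pos.1 (show 0 < #{i | f i ≤ orderStat f q} by omega)
  exact (hf k).not_gt (lt_of_le_of_lt (Finset.mem_filter.1 hk).2 hneg)

theorem Finset.sum_card_lt_eq_sum_range_choose {M : Type*} [AddCommMonoid M] {K q : ℕ}
    (hqK : q ≤ K) (f : ℕ → M) :
    ∑ A : Finset (Fin K) with #A < q, f #A = ∑ j ∈ range q, K.choose j • f j := by
  rw [sum_filter, ← powerset_univ, sum_powerset_apply_card (fun j => if j < q then f j else 0),
    card_univ, Fintype.card_fin]
  simp_rw [smul_ite, smul_zero]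
  rw [← sum_filter]
  congr 1
  ext j
  simp only [mem_filter, mem_range]
  omega

theorem setOf_filter_le_eq_iInter {Ω ι : Type*} [Fintype ι] [DecidableEq ι]
    (X : ι → Ω → ℝ) (t : ℝ) (A : Finset ι) :
    {ω | ({i | X i ω ≤ t} : Finset ι) = A}
      = ⋂ i ∈ (univ : Finset ι), X i ⁻¹' (if i ∈ A then Set.Iic t else Set.Ioi t) := by
  ext ω
  simp only [Set.mem_ofPred_eq, Finset.ext_iff, mem_filter, mem_univ, true_and, Set.mem_iInter,
    Set.mem_preimage, forall_const]
  refine forall_congr' fun i => ?_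
  split_ifs with hi <;> simp [hi]

section Fibers

variable {Ω ι : Type*} [MeasurableSpace Ω] {P : Measure Ω}

theorem measurableSet_filter_le_eq [Fintype ι] [DecidableEq ι] {X : ι → Ω → ℝ}
    (hX : ∀ i, Measurable (X i)) (t : ℝ) (A : Finset ι) :
    MeasurableSet {ω | ({i | X i ω ≤ t} : Finset ι) = A} := by
  rw [setOf_filter_le_eq_iInter]
  refine Finset.measurableSet_biInter _ fun i _ => hX i ?_
  split_ifs <;> simp

theorem measurable_orderStat {K q : ℕ} {X : Fin K → Ω → ℝ} (hX : ∀ i, Measurable (X i))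
    (hq : 1 ≤ q) (hqK : q ≤ K) : Measurable fun ω => orderStat (fun i => X i ω) q := by
  refine measurable_of_Iic fun t => ?_
  have hset : (fun ω => orderStat (fun i => X i ω) q) ⁻¹' Set.Iic t
      = ⋃ A ∈ ({A | q ≤ #A} : Finset (Finset (Fin K))),
          {ω | ({i | X i ω ≤ t} : Finset (Fin K)) = A} := by
    ext ω
    simp only [Set.mem_preimage, Set.mem_Iic, Set.mem_iUnion, mem_filter, mem_univ, true_and,
      Set.mem_ofPred_eq, exists_prop, exists_eq_right']
    exact orderStat_le_iff _ hq hqK t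
  rw [hset]
  exact Finset.measurableSet_biUnion _ fun A _ => measurableSet_filter_le_eq hX t A

theorem measureReal_setOf_filter_le_eq [IsProbabilityMeasure P] [Fintype ι] [DecidableEq ι]
    {X : ι → Ω → ℝ} (hX : ∀ i, Measurable (X i)) (hindep : iIndepFun X P) {t p : ℝ}
    (hp : ∀ i, P.real (X i ⁻¹' Set.Iic t) = p) (A : Finset ι) :
    P.real {ω | ({i | X i ω ≤ t} : Finset ι) = A}
      = p ^ #A * (1 - p) ^ (Fintype.card ι - #A) := by
  have hsets : ∀ i ∈ (univ : Finset ι),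
      MeasurableSet (if i ∈ A then Set.Iic t else Set.Ioi t) := by
    intro i _; split_ifs <;> simp
  have hfactor : ∀ i, P.real (X i ⁻¹' (if i ∈ A then Set.Iic t else Set.Ioi t))
      = if i ∈ A then p else 1 - p := by
    intro i
    split_ifs
    · exact hp i
    · rw [← hp i, ← probReal_compl_eq_one_sub (hX i measurableSet_Iic),
        ← Set.preimage_compl, Set.compl_Iic]
  rw [setOf_filter_le_eq_iInter, measureReal_def,
    hindep.measure_inter_preimage_eq_mul _ hsets, ENNReal.toReal_prod]
  simp only [← measureReal_def, hfactor]
  rw [prod_ite, prod_const, prod_const, filter_not, filter_mem_eq_inter, univ_inter,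
    ← compl_eq_univ_sdiff, card_compl]

theorem measureReal_lt_orderStat [IsProbabilityMeasure P] {K q : ℕ} {X : Fin K → Ω → ℝ}
    (hX : ∀ i, Measurable (X i)) (hindep : iIndepFun X P) {t p : ℝ}
    (hp : ∀ i, P.real (X i ⁻¹' Set.Iic t) = p) (hq : 1 ≤ q) (hqK : q ≤ K) :
    P.real {ω | t < orderStat (fun i => X i ω) q}
      = ∑ j ∈ range q, K.choose j * (p ^ j * (1 - p) ^ (K - j)) := by
  have hset : {ω | t < orderStat (fun i => X i ω) q}
      = (fun ω => ({i | X i ω ≤ t} : Finset (Fin K)))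
          ⁻¹' ↑({A | #A < q} : Finset (Finset (Fin K))) := by
    ext ω
    simp only [Set.mem_preimage, mem_coe, mem_filter, mem_univ, true_and, Set.mem_ofPred_eq]
    rw [← not_le, orderStat_le_iff _ hq hqK, not_le]
  rw [hset, ← sum_measureReal_preimage_singleton _ fun A _ => measurableSet_filter_le_eq hX t A]
  simp only [Set.preimage, Set.mem_singleton_iff, measureReal_setOf_filter_le_eq hX hindep hp,
    Fintype.card_fin]
  rw [sum_card_lt_eq_sum_range_choose hqK fun j => p ^ j * (1 - p) ^ (K - j)]
  simp only [nsmul_eq_mul]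

end Fibers

theorem exp_neg_mul_pow (η t : ℝ) (n : ℕ) : exp (-(η * t)) ^ n = exp (-(n * η) * t) := by
  rw [← Real.exp_nat_mul]; ring_nf

theorem one_sub_pow_succ_mul_pow {R : Type*} [CommRing R] (x : R) (j n : ℕ) :
    (1 - x) ^ (j + 1) * x ^ n = (1 - x) ^ j * x ^ n - (1 - x) ^ j * x ^ (n + 1) := by
  ring

theorem integrableOn_one_sub_exp_pow_mul_exp_pow {η : ℝ} (hη : 0 < η) (j : ℕ) {n : ℕ}
    (hn : 0 < n) :
    IntegrableOn (fun t => (1 - exp (-(η * t))) ^ j * exp (-(η * t)) ^ n) (Set.Ioi 0) := by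
  induction j generalizing n with
  | zero =>
    simp only [pow_zero, one_mul, exp_neg_mul_pow]
    exact integrableOn_exp_mul_Ioi (by simp; positivity) 0
  | succ j ih =>
    simp_rw [one_sub_pow_succ_mul_pow]
    exact (ih hn).sub (ih n.add_one_pos)

theorem integral_one_sub_exp_pow_mul_exp_pow {η : ℝ} (hη : 0 < η) (j : ℕ) {n : ℕ}
    (hn : 0 < n) :
    ∫ t in Set.Ioi 0, (1 - exp (-(η * t))) ^ j * exp (-(η * t)) ^ n
      = 1 / (η * n * (n + j).choose j) := by
  induction j generalizing n with
  | zero =>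
    simp only [pow_zero, one_mul, exp_neg_mul_pow, add_zero, Nat.choose_zero_right,
      Nat.cast_one, mul_one]
    rw [integral_exp_mul_Ioi (by simp; positivity), mul_zero, exp_zero]
    field_simp
  | succ j ih =>
    simp_rw [one_sub_pow_succ_mul_pow]
    rw [integral_sub (integrableOn_one_sub_exp_pow_mul_exp_pow hη j hn)
      (integrableOn_one_sub_exp_pow_mul_exp_pow hη j n.add_one_pos), ih hn, ih n.add_one_pos]
    have h1 : (n + j).choose j * (n + 1 + j) = (n + 1 + j).choose j * (n + 1) := by
      have := Nat.choose_mul_succ_eq (n + j) j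
      rwa [show n + j + 1 - j = n + 1 by omega, Nat.add_right_comm n j 1] at this
    have h2 : (n + 1 + j) * (n + j).choose j = (n + 1 + j).choose (j + 1) * (j + 1) := by
      have := Nat.add_one_mul_choose_eq (n + j) j
      rwa [Nat.add_right_comm n j 1] at this
    have hc1 : ((n + 1 + j).choose j : ℝ) = (n + j).choose j * (n + 1 + j) / (n + 1) := by
      rw [eq_div_iff (by positivity)]; exact_mod_cast h1.symm
    have hc2 : ((n + 1 + j).choose (j + 1) : ℝ) = (n + 1 + j) * (n + j).choose j / (j + 1) := by
      rw [eq_div_iff (by positivity)]; exact_mod_cast h2.symm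
    have hc : (0 : ℝ) < (n + j).choose j := by exact_mod_cast Nat.choose_pos (by omega)
    rw [show n + (j + 1) = n + 1 + j by omega]
    push_cast
    rw [hc1, hc2]
    field_simp
    ring

theorem harmonic_sub_harmonic_sub {K q : ℕ} (hqK : q ≤ K) :
    (harmonic K : ℝ) - harmonic (K - q) = ∑ j ∈ range q, 1 / ((K - j : ℕ) : ℝ) := by
  induction q with
  | zero => simp
  | succ q ih =>
    rw [sum_range_succ, ← ih (by omega), show K - q = K - (q + 1) + 1 by omega, harmonic_succ]
    push_cast
    ring

section Exponential

variable {Ω : Type*} [MeasurableSpace Ω] {P : Measure Ω} {η : ℝ}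

theorem measureReal_preimage_Iic_of_map_eq_expMeasure (hη : 0 < η) {Y : Ω → ℝ}
    (hY : Measurable Y) (hd : P.map Y = expMeasure η) {t : ℝ} (ht : 0 ≤ t) :
    P.real (Y ⁻¹' Set.Iic t) = 1 - exp (-(η * t)) := by
  have := isProbabilityMeasure_expMeasure hη
  rw [← map_measureReal_apply hY measurableSet_Iic, hd, ← cdf_eq_real, cdf_expMeasure_eq hη,
    if_pos ht]

theorem ae_pos_of_map_eq_expMeasure [IsFiniteMeasure P] (hη : 0 < η) {Y : Ω → ℝ}
    (hY : Measurable Y) (hd : P.map Y = expMeasure η) : ∀ᵐ ω ∂P, 0 < Y ω := by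
  have h0 := measureReal_preimage_Iic_of_map_eq_expMeasure hη hY hd le_rfl
  rw [mul_zero, neg_zero, exp_zero, sub_self, measureReal_eq_zero_iff] at h0
  rw [ae_iff]
  simp only [not_lt]
  exact h0

variable [IsProbabilityMeasure P] {K q : ℕ} {X : Fin K → Ω → ℝ}

theorem ae_nonneg_orderStat (hη : 0 < η) (hX : ∀ k, Measurable (X k))
    (hd : ∀ k, P.map (X k) = expMeasure η) (hq : 1 ≤ q) (hqK : q ≤ K) :
    ∀ᵐ ω ∂P, 0 ≤ orderStat (fun k => X k ω) q := by
  filter_upwards [ae_all_iff.2 fun k => ae_pos_of_map_eq_expMeasure hη (hX k) (hd k)] with ω hω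
  exact orderStat_nonneg (fun k => (hω k).le) hq hqK

theorem lintegral_orderStat_of_map_eq_expMeasure (hη : 0 < η) (hX : ∀ k, Measurable (X k))
    (hindep : iIndepFun X P) (hd : ∀ k, P.map (X k) = expMeasure η) (hq : 1 ≤ q)
    (hqK : q ≤ K) :
    ∫⁻ ω, ENNReal.ofReal (orderStat (fun k => X k ω) q) ∂P
      = ENNReal.ofReal (((harmonic K : ℝ) - harmonic (K - q)) / η) := by
  set S : ℝ → ℝ := fun t =>
    ∑ j ∈ range q, K.choose j * ((1 - exp (-(η * t))) ^ j * exp (-(η * t)) ^ (K - j))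
  have hsurvival : ∀ t ∈ Set.Ioi (0 : ℝ),
      P {ω | t < orderStat (fun k => X k ω) q} = ENNReal.ofReal (S t) := fun t ht => by
    rw [← ofReal_measureReal, measureReal_lt_orderStat hX hindep
      (fun k => measureReal_preimage_Iic_of_map_eq_expMeasure hη (hX k) (hd k) (le_of_lt ht))
      hq hqK, sub_sub_cancel]
  have hK : ∀ j ∈ range q, 0 < K - j := fun j hj => by have := mem_range.1 hj; omega
  have hS_int : IntegrableOn S (Set.Ioi 0) := integrable_finsetSum _ fun j hj =>
    (integrableOn_one_sub_exp_pow_mul_exp_pow hη j (hK j hj)).const_mul _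
  have hS_nonneg : 0 ≤ᵐ[volume.restrict (Set.Ioi 0)] S := by
    filter_upwards [ae_restrict_mem measurableSet_Ioi] with t ht
    have : 0 ≤ 1 - exp (-(η * t)) :=
      sub_nonneg.2 (exp_le_one_iff.2 (neg_nonpos.2 (mul_pos hη ht).le))
    exact sum_nonneg fun j _ => by positivity
  rw [lintegral_eq_lintegral_meas_lt P (ae_nonneg_orderStat hη hX hd hq hqK)
      (measurable_orderStat hX hq hqK).aemeasurable,
    setLIntegral_congr_fun measurableSet_Ioi hsurvival,
    ← ofReal_integral_eq_lintegral_ofReal hS_int hS_nonneg,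
    integral_finsetSum _ fun j hj =>
      (integrableOn_one_sub_exp_pow_mul_exp_pow hη j (hK j hj)).const_mul _,
    harmonic_sub_harmonic_sub hqK, sum_div]
  refine congrArg ENNReal.ofReal (sum_congr rfl fun j hj => ?_)
  have hjK : j ≤ K := by have := mem_range.1 hj; omega
  rw [integral_const_mul, integral_one_sub_exp_pow_mul_exp_pow hη j (hK j hj),
    Nat.sub_add_cancel hjK]
  have : (0 : ℝ) < K.choose j := by exact_mod_cast Nat.choose_pos hjK
  field_simp

theorem integrable_orderStat_of_map_eq_expMeasure (hη : 0 < η) (hX : ∀ k, Measurable (X k))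
    (hindep : iIndepFun X P) (hd : ∀ k, P.map (X k) = expMeasure η) (hq : 1 ≤ q)
    (hqK : q ≤ K) : Integrable (fun ω => orderStat (fun k => X k ω) q) P := by
  refine ⟨(measurable_orderStat hX hq hqK).aestronglyMeasurable, ?_⟩
  rw [hasFiniteIntegral_iff_ofReal (ae_nonneg_orderStat hη hX hd hq hqK),
    lintegral_orderStat_of_map_eq_expMeasure hη hX hindep hd hq hqK]
  exact ENNReal.ofReal_lt_top

theorem integral_orderStat_of_map_eq_expMeasure (hη : 0 < η) (hX : ∀ k, Measurable (X k))
    (hindep : iIndepFun X P) (hd : ∀ k, P.map (X k) = expMeasure η) (hq : 1 ≤ q)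
    (hqK : q ≤ K) :
    ∫ ω, orderStat (fun k => X k ω) q ∂P = ((harmonic K : ℝ) - harmonic (K - q)) / η := by
  have hH : 0 ≤ (harmonic K : ℝ) - harmonic (K - q) := by
    rw [harmonic_sub_harmonic_sub hqK]
    exact sum_nonneg fun j _ => by positivity
  rw [integral_eq_lintegral_of_nonneg_ae (ae_nonneg_orderStat hη hX hd hq hqK)
      (measurable_orderStat hX hq hqK).aestronglyMeasurable,
    lintegral_orderStat_of_map_eq_expMeasure hη hX hindep hd hq hqK,
    ENNReal.toReal_ofReal (div_nonneg hH hη.le)]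

end Exponential

theorem mds_total_latency_general
    {Ω : Type*} [MeasurableSpace Ω] (P : Measure Ω) [IsProbabilityMeasure P]
    (K : ℕ) (hK : 1 ≤ K) (μ : ℝ) (hμ1 : 1 / (K : ℝ) ≤ μ)
    (m : ℕ) (τ γ η : ℝ) (hτ : 0 < τ) (hη : 0 < η)
    (lam : Fin K → Ω → ℝ)
    (hmeas : ∀ k, Measurable (lam k))
    (hindep : iIndepFun lam P)
    (hdist : ∀ k, P.map (lam k) = expMeasure η)
    (hq : ⌈1 / μ⌉₊ ≤ K) :
    (∫ ω, (orderStat (fun k => lam k ω) ⌈1 / μ⌉₊ + τ * ((m : ℝ) * μ)) / τ ∂P)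
        + γ * (m : ℝ)
      = ((harmonic K : ℝ) - (harmonic (K - ⌈1 / μ⌉₊) : ℝ)) / (η * τ)
        + (m : ℝ) * (μ + γ) := by
  have hμ : 0 < μ := lt_of_lt_of_le (by positivity) hμ1
  have hq1 : 1 ≤ ⌈1 / μ⌉₊ := Nat.ceil_pos.2 (by positivity)
  have hint := integrable_orderStat_of_map_eq_expMeasure hη hmeas hindep hdist hq1 hq
  rw [integral_div, integral_add hint (integrable_const _), integral_const, probReal_univ, one_smul,
    integral_orderStat_of_map_eq_expMeasure hη hmeas hindep hdist hq1 hq]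
  field_simp
  ring

/-- For the MDS-coded scheme, the computing phase lasts `λ_{⌈1/μ⌉:K} + τ·m·μ`; the
normalized computing delay is this divided by `τ`, the communication delay is `m`, and the
average total normalized latency equals `(H_K - H_{K-⌈1/μ⌉})/(η·τ) + m·(μ + γ)`. -/
theorem mds_total_latency
    {Ω : Type*} [MeasurableSpace Ω] (P : Measure Ω) [IsProbabilityMeasure P]
    (K : ℕ) (hK : 1 ≤ K) (μ : ℝ) (hμ1 : 1 / (K : ℝ) ≤ μ) (hμ2 : μ ≤ 1)
    (m : ℕ) (hm : 1 ≤ m) (τ γ η : ℝ) (hτ : 0 < τ) (hγ : 0 ≤ γ) (hη : 0 < η)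
    (lam : Fin K → Ω → ℝ)
    (hmeas : ∀ k, Measurable (lam k))
    (hindep : iIndepFun lam P)
    (hdist : ∀ k, P.map (lam k) = expMeasure η)
    (hq : ⌈1 / μ⌉₊ ≤ K) :
    (∫ ω, (orderStat (fun k => lam k ω) ⌈1 / μ⌉₊ + τ * ((m : ℝ) * μ)) / τ ∂P)
        + γ * (m : ℝ)
      = ((harmonic K : ℝ) - (harmonic (K - ⌈1 / μ⌉₊) : ℝ)) / (η * τ)
        + (m : ℝ) * (μ + γ) :=
  mds_total_latency_general P K hK μ hμ1 m τ γ η hτ hη lam hmeas hindep hdist hq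
end

section
/- For the hybrid scheme with parameters (q, ρ1, ρ2) satisfying ρ1·ρ2 ≤ K·μ and the decodability condition, the total communication latency Σ_{r=r_q}^{r_max} B_r/r + (m - Σ_{r=r_q}^{r_max} B_r)/(r_q - 1) with B_r = C(q,r)·C(K-q, ρ2-r)·b, b = ρ1·m/C(K,ρ2), is at most m, with equality only if r_max = 1. -/
/-- For the hybrid scheme with parameters `(q, ρ1, ρ2)` satisfying `ρ1·ρ2 ≤ K·μ` and the
decodability condition, the communication latency
`Σ_{r=r_q}^{r_max} B_r/r + (m - Σ_{r=r_q}^{r_max} B_r)/(r_q - 1)` with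
`B_r = C(q,r)·C(K-q,ρ2-r)·b`, `b = ρ1·m/C(K,ρ2)`, is at most `m`, with equality only if
`r_max = 1`. -/
theorem hybrid_comm_latency_le (K q ρ2 m : ℕ) (ρ1 μ : ℝ)
    (hK : 1 ≤ K) (hq1 : 1 ≤ q) (hqK : q ≤ K) (h1 : 1 ≤ ρ2) (h2 : ρ2 ≤ K) (hm : 1 ≤ m)
    (hρ1 : 1 ≤ ρ1) (hμ1 : 1 / (K : ℝ) ≤ μ) (hμ2 : μ ≤ 1)
    (hstore : ρ1 * (ρ2 : ℝ) ≤ (K : ℝ) * μ)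
    (hdec : (K.choose ρ2 : ℝ) - ((K - q).choose ρ2 : ℝ) ≥ (K.choose ρ2 : ℝ) / ρ1)
    (b : ℝ) (hb : b = ρ1 * (m : ℝ) / (K.choose ρ2 : ℝ))
    (B : ℕ → ℝ) (hB : ∀ r, B r = (q.choose r : ℝ) * ((K - q).choose (ρ2 - r) : ℝ) * b)
    (rmax rq : ℕ) (hrmax : rmax = min q ρ2)
    (hrq : rq = sInf {r : ℕ | ∑ i ∈ Finset.Icc r rmax, B i ≤ (m : ℝ)}) :
    ((∑ r ∈ Finset.Icc rq rmax, B r / (r : ℝ))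
        + ((m : ℝ) - ∑ r ∈ Finset.Icc rq rmax, B r) / ((rq : ℝ) - 1)
      ≤ (m : ℝ))
    ∧ ((∑ r ∈ Finset.Icc rq rmax, B r / (r : ℝ))
        + ((m : ℝ) - ∑ r ∈ Finset.Icc rq rmax, B r) / ((rq : ℝ) - 1)
      = (m : ℝ) → rmax = 1) := by
  have hmR : (1 : ℝ) ≤ (m : ℝ) := by exact_mod_cast hm
  have hCK : (0 : ℝ) < (K.choose ρ2 : ℝ) := by exact_mod_cast Nat.choose_pos h2
  have hbpos : 0 < b := by
    rw [hb]
    exact div_pos (mul_pos (lt_of_lt_of_le one_pos hρ1) (by linarith)) hCK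
  have hBnn : ∀ r, 0 ≤ B r := by
    intro r
    rw [hB]
    exact mul_nonneg (mul_nonneg (Nat.cast_nonneg _) (Nat.cast_nonneg _)) hbpos.le
  have hrmax1 : 1 ≤ rmax := by omega
  -- the defining set is nonempty: rmax + 1 belongs to it
  have hmem : (rmax + 1) ∈ {r : ℕ | ∑ i ∈ Finset.Icc r rmax, B i ≤ (m : ℝ)} := by
    simp only [Set.mem_setOf_eq, Finset.Icc_eq_empty (by omega : ¬ rmax + 1 ≤ rmax),
      Finset.sum_empty]
    linarith
  have hne : {r : ℕ | ∑ i ∈ Finset.Icc r rmax, B i ≤ (m : ℝ)}.Nonempty := ⟨_, hmem⟩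
  have hSle : ∑ r ∈ Finset.Icc rq rmax, B r ≤ (m : ℝ) := by
    have := Nat.sInf_mem hne
    rw [← hrq] at this
    exact this
  have hrqle : rq ≤ rmax + 1 := by
    rw [hrq]; exact Nat.sInf_le hmem
  set S : ℝ := ∑ r ∈ Finset.Icc rq rmax, B r with hS
  have hmS : 0 ≤ (m : ℝ) - S := sub_nonneg.mpr hSle
  have hterm : ∀ r ∈ Finset.Icc rq rmax, B r / (r : ℝ) ≤ B r := by
    intro r _
    rcases Nat.eq_zero_or_pos r with h | h
    · simp only [h, Nat.cast_zero, div_zero]; exact hBnn 0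
    · exact div_le_self (hBnn r) (by exact_mod_cast h)
  have hsum : ∑ r ∈ Finset.Icc rq rmax, B r / (r : ℝ) ≤ S := Finset.sum_le_sum hterm
  have hdiv : ((m : ℝ) - S) / ((rq : ℝ) - 1) ≤ (m : ℝ) - S := by
    rcases lt_or_ge rq 2 with h | h
    · interval_cases rq
      · rw [show ((0 : ℕ) : ℝ) - 1 = -1 by norm_num, div_neg, div_one]
        linarith
      · rw [show ((1 : ℕ) : ℝ) - 1 = 0 by norm_num, div_zero]
        exact hmS
    · exact div_le_self hmS (by
        have : (2 : ℝ) ≤ (rq : ℝ) := by exact_mod_cast h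
        linarith)
  constructor
  · linarith
  · intro heq
    by_contra hne1
    have h2max : 2 ≤ rmax := by omega
    rcases le_or_gt rq rmax with hle | hgt
    · have hBpos : 0 < B rmax := by
        rw [hB]
        refine mul_pos (mul_pos ?_ ?_) hbpos
        · exact_mod_cast Nat.choose_pos (by omega : rmax ≤ q)
        · exact_mod_cast Nat.choose_pos (by omega : ρ2 - rmax ≤ K - q)
      have hstrict : ∑ r ∈ Finset.Icc rq rmax, B r / (r : ℝ) < S := by
        refine Finset.sum_lt_sum hterm ⟨rmax, Finset.mem_Icc.mpr ⟨hle, le_rfl⟩, ?_⟩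
        exact div_lt_self hBpos (by exact_mod_cast h2max)
      linarith
    · have hrqe : rq = rmax + 1 := by omega
      subst hrqe
      rw [Finset.Icc_eq_empty (by omega : ¬ rmax + 1 ≤ rmax), Finset.sum_empty] at heq
      have hcast : ((rmax + 1 : ℕ) : ℝ) - 1 = (rmax : ℝ) := by push_cast; ring
      rw [hcast] at heq
      have hlt : (m : ℝ) / (rmax : ℝ) < (m : ℝ) :=
        div_lt_self (by linarith) (by exact_mod_cast h2max)
      have hS0 : S = 0 := by
        rw [hS, Finset.Icc_eq_empty (by omega : ¬ rmax + 1 ≤ rmax), Finset.sum_empty]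
      rw [hS0, sub_zero] at heq
      linarith
end
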